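/- Let Γ be a weighted graph admitting a lattice embedding F into ℤ^N. Suppose that for some coordinate index i there are exactly two vertices A and B whose images under F have nonzero i-th coordinate, that the i-th coordinate of F(A) is ±1, and that the i-th coordinate of F(B) is c ≠ 0. Let Γ' be the weighted graph obtained from Γ by adding one new vertex C of weight −2 adjacent exactly to A, and decreasing the weight of B by c². Then Γ' admits a lattice embedding F' into ℤ^{N+1}; moreover F' can be chosen so that for some coordinate index the only two vertices whose images have nonzero coordinate there are C and B, these coordinates have absolute values 1 and |c| respectively, and their product equals the product of the i-th coordinates of F(A) and F(B). (GOCL operations preserve lattice embeddability.) -/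

import Mathlib

/-!
With `ε = F A i = ±1` and `c = F B i`, keep every old vector, append a coordinate which is
`ε c` on `B` and `0` elsewhere, and send the new vertex `C` to `(-ε eᵢ, 1)`. Then
`C · C = -2`, `C · A = ε² = 1`, `C · B = ε c - ε c = 0`, `C · v = 0` for all other `v`
(their `i`-th coordinate vanishes), and the only changed old product is `B · B`, which drops by
`(ε c)² = c²`. The appended coordinate is supported on `C` and `B`, with values `1` and `ε c`.
-/

/-- The standard negative definite bilinear form on `ℤ^N`. -/
def negForm {N : ℕ} (x y : Fin N → ℤ) : ℤ := -∑ i, x i * y i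

/-- A lattice embedding of a weighted graph `(G, w)` into `ℤ^N` with its negative
definite form. -/
def IsLatticeEmbedding {V : Type*} (G : SimpleGraph V) (w : V → ℤ) {N : ℕ}
    (F : V → Fin N → ℤ) : Prop :=
  (∀ v, negForm (F v) (F v) = w v) ∧
  (∀ u v, G.Adj u v → negForm (F u) (F v) = 1) ∧
  (∀ u v, u ≠ v → ¬G.Adj u v → negForm (F u) (F v) = 0)

/-- The graph obtained from `G` by adding one new vertex adjacent exactly to `A`. -/
def goclGraph {V : Type*} [DecidableEq V] (G : SimpleGraph V) (A : V) :
    SimpleGraph (V ⊕ Unit) :=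
  SimpleGraph.fromRel (fun x y =>
    match x, y with
    | .inl u, .inl v => G.Adj u v
    | .inl u, .inr _ => u = A
    | .inr _, _ => False)

section NegForm

variable {N : ℕ}

theorem negForm_comm (x y : Fin N → ℤ) : negForm x y = negForm y x := by
  simp only [negForm, mul_comm]

theorem negForm_snoc_snoc (x y : Fin N → ℤ) (a b : ℤ) :
    negForm (Fin.snoc x a) (Fin.snoc y b) = negForm x y - a * b := by
  simp [negForm, Fin.sum_univ_castSucc]
  ring

theorem negForm_single_left (i : Fin N) (t : ℤ) (y : Fin N → ℤ) :
    negForm (Pi.single i t) y = -(t * y i) := by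
  simp [negForm, Pi.single_apply]

end NegForm

open Classical in
theorem isLatticeEmbedding_iff {V : Type*} (G : SimpleGraph V) (w : V → ℤ) {N : ℕ}
    (F : V → Fin N → ℤ) :
    IsLatticeEmbedding G w F ↔
      ∀ u v, negForm (F u) (F v) = if u = v then w u else if G.Adj u v then 1 else 0 := by
  constructor
  · rintro ⟨hw, hadj, hnadj⟩ u v
    split_ifs with huv hG
    · subst huv
      exact hw u
    · exact hadj u v hG
    · exact hnadj u v huv hG
  · intro h
    refine ⟨fun v => by simpa using h v v, fun u v hG => ?_, fun u v huv hG => ?_⟩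
    · simpa [hG.ne, hG] using h u v
    · simpa [huv, hG] using h u v

section Gocl

variable {V : Type*} [DecidableEq V] {N : ℕ}

section Graph

variable (G : SimpleGraph V) (A : V)

@[simp]
theorem goclGraph_adj_inl_inl (u v : V) :
    (goclGraph G A).Adj (.inl u) (.inl v) ↔ G.Adj u v := by
  simp only [goclGraph, SimpleGraph.fromRel_adj, ne_eq, Sum.inl.injEq]
  exact ⟨fun ⟨_, h⟩ => h.elim id fun h => h.symm, fun h => ⟨h.ne, .inl h⟩⟩

@[simp]
theorem goclGraph_adj_inl_inr (u : V) (t : Unit) :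
    (goclGraph G A).Adj (.inl u) (.inr t) ↔ u = A := by
  simp [goclGraph]

@[simp]
theorem goclGraph_adj_inr_inr (s t : Unit) : ¬(goclGraph G A).Adj (.inr s) (.inr t) := by
  simp [goclGraph]

end Graph

def goclEmbedding (F : V → Fin N → ℤ) (i : Fin N) (A B : V) : V ⊕ Unit → Fin (N + 1) → ℤ :=
  Sum.elim (fun v => Fin.snoc (F v) (if v = B then F A i * F B i else 0))
    fun _ => Fin.snoc (Pi.single i (-F A i)) 1

variable (F : V → Fin N → ℤ) (i : Fin N) (A B : V)

@[simp]
theorem goclEmbedding_inl (v : V) :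
    goclEmbedding F i A B (.inl v) = Fin.snoc (F v) (if v = B then F A i * F B i else 0) :=
  rfl

@[simp]
theorem goclEmbedding_inr (t : Unit) :
    goclEmbedding F i A B (.inr t) = Fin.snoc (Pi.single i (-F A i)) 1 :=
  rfl

theorem negForm_goclEmbedding_inl_inl (hA : IsUnit (F A i)) (u v : V) :
    negForm (goclEmbedding F i A B (.inl u)) (goclEmbedding F i A B (.inl v)) =
      negForm (F u) (F v) - if u = B ∧ v = B then F B i ^ 2 else 0 := by
  have hsq : F A i * F B i * (F A i * F B i) = F B i ^ 2 := by
    linear_combination F B i ^ 2 * Int.isUnit_mul_self hA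
  simp only [goclEmbedding_inl, negForm_snoc_snoc]
  split_ifs <;> simp_all

theorem negForm_goclEmbedding_inl_inr (v : V) (t : Unit) :
    negForm (goclEmbedding F i A B (.inl v)) (goclEmbedding F i A B (.inr t)) =
      F A i * F v i - if v = B then F A i * F B i else 0 := by
  simp only [goclEmbedding_inl, goclEmbedding_inr, negForm_snoc_snoc, negForm_comm (F v),
    negForm_single_left]
  ring

theorem negForm_goclEmbedding_inr_inr (hA : IsUnit (F A i)) (s t : Unit) :
    negForm (goclEmbedding F i A B (.inr s)) (goclEmbedding F i A B (.inr t)) = -2 := by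
  simp only [goclEmbedding_inr, negForm_snoc_snoc, negForm_single_left, Pi.single_eq_same]
  linear_combination -Int.isUnit_mul_self hA

variable {F i A B}

theorem isLatticeEmbedding_goclEmbedding {G : SimpleGraph V} {w : V → ℤ}
    {w' : V ⊕ Unit → ℤ} (hF : IsLatticeEmbedding G w F) (hAB : A ≠ B)
    (honly : ∀ v, F v i ≠ 0 → v = A ∨ v = B) (hA : IsUnit (F A i))
    (hw'_inl : ∀ v, w' (.inl v) = if v = B then w v - F B i ^ 2 else w v)
    (hw'_inr : ∀ t, w' (.inr t) = -2) :
    IsLatticeEmbedding (goclGraph G A) w' (goclEmbedding F i A B) := by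
  classical
  rw [isLatticeEmbedding_iff] at hF ⊢
  have hinl_inr (v : V) (t : Unit) :
      negForm (goclEmbedding F i A B (.inl v)) (goclEmbedding F i A B (.inr t)) =
        if v = A then 1 else 0 := by
    rw [negForm_goclEmbedding_inl_inr]
    by_cases hvA : v = A
    · simp [hvA, hAB, Int.isUnit_mul_self hA]
    by_cases hvB : v = B
    · simp [hvB, hAB.symm]
    have hv : F v i = 0 := by
      by_contra hv
      exact (honly v hv).elim hvA hvB
    simp [hvA, hvB, hv]
  rintro (u | s) (v | t)
  · rw [negForm_goclEmbedding_inl_inl F i A B hA, hF]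
    by_cases huv : u = v
    · subst huv
      by_cases huB : u = B <;> simp [hw'_inl, huB]
    · have hnotBB : ¬(u = B ∧ v = B) := fun h => huv (h.1.trans h.2.symm)
      simp [huv, hnotBB]
  · simpa using hinl_inr u t
  · simpa [negForm_comm, SimpleGraph.adj_comm, eq_comm] using hinl_inr v s
  · simpa [hw'_inr] using negForm_goclEmbedding_inr_inr F i A B hA s t

end Gocl

theorem gocl_preserves_embeddability {V : Type*} [DecidableEq V]
    (G : SimpleGraph V) (w : V → ℤ) {N : ℕ} (F : V → Fin N → ℤ)
    (hF : IsLatticeEmbedding G w F)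
    (i : Fin N) (A B : V) (hAB : A ≠ B)
    (honly : ∀ v, F v i ≠ 0 → v = A ∨ v = B)
    (hA : F A i = 1 ∨ F A i = -1)
    (c : ℤ) (hB : F B i = c) :
    ∃ F' : V ⊕ Unit → Fin (N + 1) → ℤ,
      IsLatticeEmbedding (goclGraph G A)
        (fun x => match x with
          | .inl v => if v = B then w v - c ^ 2 else w v
          | .inr _ => -2) F' ∧
      ∃ j : Fin (N + 1),
        (∀ x, F' x j ≠ 0 → x = Sum.inr () ∨ x = Sum.inl B) ∧
        |F' (Sum.inr ()) j| = 1 ∧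
        |F' (Sum.inl B) j| = |c| ∧
        F' (Sum.inr ()) j * F' (Sum.inl B) j = F A i * F B i := by
  subst hB
  have hunit : IsUnit (F A i) := Int.isUnit_iff.2 hA
  refine ⟨goclEmbedding F i A B,
    isLatticeEmbedding_goclEmbedding hF hAB honly hunit (fun _ => rfl) fun _ => rfl,
    Fin.last N, ?_, by simp, by simp [abs_mul, Int.isUnit_iff_abs_eq.1 hunit], by simp⟩
  rintro (v | t) hv
  · simp_all
  · simp
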